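/- arXiv:2011.09310 — 3 statements merged into one kernel-verified Lean document; each statement's English description precedes it below -/
import Mathlib

section
/- Let (K,ν) be a henselian valued field with char K = p > 0 that admits a nontrivial maximal purely wild extension (W|K,ν) such that W|K is separable. Then K is perfect, and consequently an algebraic extension of (K,ν) is a maximal purely wild extension if and only if it is a maximal immediate algebraic extension. -/
open Polynomial IntermediateField

namespace ValWild

variable {K Ω Γ₀ : Type*} [Field K] [Field Ω] [Algebra K Ω]
  [LinearOrderedCommGroupWithZero Γ₀]

/-- `γ` lies in the value group of the subextension `B` (w.r.t. the ambient valuation `w`). -/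
def IsValueOn (w : Valuation Ω Γ₀) (B : IntermediateField K Ω) (γ : Γ₀) : Prop :=
  ∃ y ∈ B, y ≠ 0 ∧ w y = γ

/-- The residue of `x` lies in the residue field of `B`. -/
def ResidueInOn (w : Valuation Ω Γ₀) (B : IntermediateField K Ω) (x : Ω) : Prop :=
  ∃ y ∈ B, w y ≤ 1 ∧ w (x - y) < 1

/-- `x` is algebraic over `B`. -/
def AlgOver (B : IntermediateField K Ω) (x : Ω) : Prop :=
  ∃ f : Polynomial Ω, f.Monic ∧ (∀ i, f.coeff i ∈ B) ∧ f.eval x = 0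

/-- `(L|B,w)` is an immediate extension: same value group and same residue field. -/
structure Immediate (w : Valuation Ω Γ₀) (B L : IntermediateField K Ω) : Prop where
  le : B ≤ L
  val : ∀ x ∈ L, x ≠ 0 → IsValueOn w B (w x)
  res : ∀ x ∈ L, w x ≤ 1 → ResidueInOn w B x

/-- `(L|B,w)` is a purely wild algebraic extension: the value group extension is a `p`-group
and the residue field extension is purely inseparable. -/
structure PurelyWild (w : Valuation Ω Γ₀) (p : ℕ) (B L : IntermediateField K Ω) : Prop where
  le : B ≤ L
  alg : ∀ x ∈ L, AlgOver B x
  val : ∀ x ∈ L, x ≠ 0 → ∃ k : ℕ, IsValueOn w B (w x ^ p ^ k)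
  res : ∀ x ∈ L, w x ≤ 1 → ∃ k : ℕ, ResidueInOn w B (x ^ p ^ k)

/-- a maximal purely wild extension of `B` (inside the ambient field). -/
def MaxPurelyWild (w : Valuation Ω Γ₀) (p : ℕ) (B W : IntermediateField K Ω) : Prop :=
  PurelyWild w p B W ∧ ∀ W', PurelyWild w p B W' → W ≤ W' → W' = W

/-- an immediate algebraic extension. -/
def ImmediateAlg (w : Valuation Ω Γ₀) (B L : IntermediateField K Ω) : Prop :=
  Immediate w B L ∧ ∀ x ∈ L, AlgOver B x

/-- a maximal immediate algebraic extension of `B`. -/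
def MaxImmediateAlg (w : Valuation Ω Γ₀) (B W : IntermediateField K Ω) : Prop :=
  ImmediateAlg w B W ∧ ∀ W', ImmediateAlg w B W' → W ≤ W' → W' = W

/-- `W` and `W'` are isomorphic over `B` via a valuation-preserving isomorphism. -/
def IsoOver (w : Valuation Ω Γ₀) (B W W' : IntermediateField K Ω) : Prop :=
  ∃ σ : W ≃+* W', (∀ (x : Ω) (hx : x ∈ W), x ∈ B → (σ ⟨x, hx⟩ : Ω) = x) ∧
    ∀ y : W, w (σ y : Ω) = w (y : Ω)

/-- `B` admits a unique maximal purely wild extension (any two are isomorphic over `B`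
by a valuation-preserving isomorphism). -/
def UniqueMaxPurelyWild (w : Valuation Ω Γ₀) (p : ℕ) (B : IntermediateField K Ω) : Prop :=
  ∀ W W', MaxPurelyWild w p B W → MaxPurelyWild w p B W' → IsoOver w B W W'

/-- `B` admits a unique maximal immediate algebraic extension. -/
def UniqueMaxImmediateAlg (w : Valuation Ω Γ₀) (B : IntermediateField K Ω) : Prop :=
  ∀ W W', MaxImmediateAlg w B W → MaxImmediateAlg w B W' → IsoOver w B W W'

/-- `(B, w)` is a henselian valued field: its valuation ring is a henselian local ring
(equivalently, `w` extends uniquely to every algebraic extension of `B`). -/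
def IsHenselianVF (w : Valuation Ω Γ₀) (B : IntermediateField K Ω) : Prop :=
  HenselianLocalRing (w.comap (algebraMap B Ω)).integer

/-- `[L : B] = m`, witnessed by a basis. -/
def FieldDeg (B L : IntermediateField K Ω) (m : ℕ) : Prop :=
  ∃ b : Fin m → Ω, (∀ i, b i ∈ L) ∧
    (∀ y ∈ L, ∃ c : Fin m → Ω, (∀ i, c i ∈ B) ∧ y = ∑ i, c i * b i) ∧
    (∀ c : Fin m → Ω, (∀ i, c i ∈ B) → ∑ i, c i * b i = 0 → ∀ i, c i = 0)

/-- `[wL : wB] = e`, witnessed by a complete system of coset representatives. -/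
def ValueIndex (w : Valuation Ω Γ₀) (B L : IntermediateField K Ω) (e : ℕ) : Prop :=
  ∃ z : Fin e → Ω, (∀ i, z i ∈ L ∧ z i ≠ 0) ∧
    (∀ x ∈ L, x ≠ 0 → ∃ i, ∃ y ∈ B, y ≠ 0 ∧ w x = w (z i) * w y) ∧
    (∀ i j : Fin e, i ≠ j → ¬ ∃ y ∈ B, y ≠ 0 ∧ w (z i) = w (z j) * w y)

/-- `[Lw : Bw] = d`, witnessed by elements of the valuation ring of `L` whose residues
form a basis of the residue field of `L` over that of `B`. -/
def ResidueDeg (w : Valuation Ω Γ₀) (B L : IntermediateField K Ω) (d : ℕ) : Prop :=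
  ∃ x : Fin d → Ω, (∀ i, x i ∈ L ∧ w (x i) ≤ 1) ∧
    (∀ y ∈ L, w y ≤ 1 → ∃ c : Fin d → Ω, (∀ i, c i ∈ B ∧ w (c i) ≤ 1) ∧
      w (y - ∑ i, c i * x i) < 1) ∧
    (∀ c : Fin d → Ω, (∀ i, c i ∈ B ∧ w (c i) ≤ 1) →
      w (∑ i, c i * x i) < 1 → ∀ i, w (c i) < 1)

/-- the finite extension `(L|B,w)` is defectless: `[L:B] = [wL:wB]·[Lw:Bw]`. -/
def Defectless (w : Valuation Ω Γ₀) (B L : IntermediateField K Ω) : Prop :=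
  ∃ e d m : ℕ, ValueIndex w B L e ∧ ResidueDeg w B L d ∧ FieldDeg B L m ∧ m = e * d

/-- the residue of `x` is separable algebraic over the residue field of `B`:
it is a simple root of a polynomial with coefficients in the residue field of `B`. -/
def ResidueSepAt (w : Valuation Ω Γ₀) (B : IntermediateField K Ω) (x : Ω) : Prop :=
  ∃ (n : ℕ) (a : Fin (n + 1) → Ω), (∀ i, a i ∈ B ∧ w (a i) ≤ 1) ∧
    w (∑ i : Fin (n + 1), a i * x ^ (i : ℕ)) < 1 ∧
    w (∑ i : Fin (n + 1), ((i : ℕ) : Ω) * a i * x ^ ((i : ℕ) - 1)) = 1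

/-- the residue field extension of `(L|B,w)` is separable. -/
def ResidueSep (w : Valuation Ω Γ₀) (B L : IntermediateField K Ω) : Prop :=
  ∀ x ∈ L, w x ≤ 1 → ResidueSepAt w B x

/-- `(L|B,w)` is unramified: same value group and separable residue field extension. -/
def Unramified (w : Valuation Ω Γ₀) (B L : IntermediateField K Ω) : Prop :=
  B ≤ L ∧ (∀ x ∈ L, AlgOver B x) ∧ (∀ x ∈ L, x ≠ 0 → IsValueOn w B (w x)) ∧
    ResidueSep w B L

/-- `(L|B,w)` is a tame extension (`p` the residue characteristic): every finite
subextension `E'` has value-group index prime to `p`, separable residue field extension,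
and is defectless. -/
def Tame (w : Valuation Ω Γ₀) (p : ℕ) (B L : IntermediateField K Ω) : Prop :=
  B ≤ L ∧ (∀ x ∈ L, AlgOver B x) ∧
  ∀ E' : IntermediateField K Ω, B ≤ E' → E' ≤ L → (∃ m : ℕ, FieldDeg B E' m) →
    (∃ e : ℕ, ValueIndex w B E' e ∧ ¬ (p ∣ e)) ∧ ResidueSep w B E' ∧ Defectless w B E'

/-- `L` and `F` are linearly disjoint over `B`: every finite `B`-linearly independent
family in `L` remains linearly independent over `F`. -/
def LinDisj (B L F : IntermediateField K Ω) : Prop :=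
  ∀ (m : ℕ) (x : Fin m → Ω), (∀ i, x i ∈ L) →
    (∀ c : Fin m → Ω, (∀ i, c i ∈ B) → ∑ i, c i * x i = 0 → ∀ i, c i = 0) →
    (∀ c : Fin m → Ω, (∀ i, c i ∈ F) → ∑ i, c i * x i = 0 → ∀ i, c i = 0)

/-- the residue field extension of `(L|B,w)` is an Artin-Schreier extension, generated by
the residue of `x`, an Artin-Schreier generator over the residue field of `B`. -/
def ResidueASExt (w : Valuation Ω Γ₀) (p : ℕ) (B L : IntermediateField K Ω) : Prop :=
  ∃ x ∈ L, w x ≤ 1 ∧ (∃ t ∈ B, w t ≤ 1 ∧ w (x ^ p - x - t) < 1) ∧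
    ¬ ResidueInOn w B x ∧
    ∀ y ∈ L, w y ≤ 1 → ∃ (m : ℕ) (cfs : Fin (m + 1) → Ω),
      (∀ i, cfs i ∈ B ∧ w (cfs i) ≤ 1) ∧ w (y - ∑ i : Fin (m + 1), cfs i * x ^ (i : ℕ)) < 1

/-- the residue field of `B` is Artin-Schreier closed. -/
def ResidueASClosed (w : Valuation Ω Γ₀) (p : ℕ) (B : IntermediateField K Ω) : Prop :=
  ∀ t ∈ B, w t ≤ 1 → ∃ y ∈ B, w y ≤ 1 ∧ w (y ^ p - y - t) < 1

end ValWild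

open ValWild Polynomial IntermediateField

/-! If `z ^ p` lies in a maximal purely wild extension `W` of `K`, then so does `z`: the
Frobenius preimage of `W` is again purely wild over `K`. Hence every `p`-th root of an element
of `K` lies in `W`; when `W|K` is separable such a root is separable and purely inseparable
over `K`, so it lies in `K`. Over a perfect field a `p`-power relation on values or residues
can be undone by taking `p`-th roots, so purely wild and immediate algebraic extensions agree. -/

theorem exists_pow_pow_eq_of_exists_pow_eq {M : Type*} [Monoid M] {S : Set M} {p : ℕ}
    (hS : ∀ y ∈ S, ∃ z ∈ S, z ^ p = y) (k : ℕ) : ∀ y ∈ S, ∃ z ∈ S, z ^ p ^ k = y := by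
  induction k with
  | zero => exact fun y hy => ⟨y, hy, pow_one y⟩
  | succ k ih =>
    intro y hy
    obtain ⟨z, hz, rfl⟩ := ih y hy
    obtain ⟨u, hu, rfl⟩ := hS z hz
    exact ⟨u, hu, by rw [pow_succ', pow_mul]⟩

theorem mem_range_of_isSeparable_of_pow_mem {F E : Type*} [Field F] [Field E] [Algebra F E]
    (q : ℕ) [ExpChar F q] {x : E} (hx : IsSeparable F x) {n : ℕ}
    (h : x ^ q ^ n ∈ (algebraMap F E).range) : x ∈ (algebraMap F E).range := by
  have hdeg := (minpoly.natSepDegree_eq_one_iff_pow_mem q).2 ⟨n, h⟩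
  rwa [hx.natSepDegree_eq_natDegree, minpoly.natDegree_eq_one_iff] at hdeg

namespace ValWild

variable {K Ω Γ₀ : Type*} [Field K] [Field Ω] [Algebra K Ω]
  [LinearOrderedCommGroupWithZero Γ₀]

theorem AlgOver.of_pow {B : IntermediateField K Ω} {x : Ω} {p : ℕ} (hp : 0 < p)
    (h : AlgOver B (x ^ p)) : AlgOver B x := by
  obtain ⟨f, hmonic, hcoeff, hroot⟩ := h
  refine ⟨expand Ω p f, hmonic.expand hp, fun i => ?_, by rwa [expand_eval]⟩
  rw [coeff_expand hp]
  split_ifs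
  exacts [hcoeff _, B.zero_mem]

def frobeniusPreimage (p : ℕ) [ExpChar Ω p] (W : IntermediateField K Ω) :
    IntermediateField K Ω :=
  (W.toSubfield.comap (frobenius Ω p)).toIntermediateField fun r => by
    rw [Subfield.mem_comap, frobenius_def, ← map_pow]
    exact W.algebraMap_mem _

theorem mem_frobeniusPreimage {p : ℕ} [ExpChar Ω p] {W : IntermediateField K Ω} {z : Ω} :
    z ∈ frobeniusPreimage p W ↔ z ^ p ∈ W :=
  Iff.rfl

theorem le_frobeniusPreimage (p : ℕ) [ExpChar Ω p] (W : IntermediateField K Ω) :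
    W ≤ frobeniusPreimage p W :=
  fun _ hz => mem_frobeniusPreimage.2 (pow_mem hz p)

variable {w : Valuation Ω Γ₀} {p : ℕ} {B W L M : IntermediateField K Ω}

theorem PurelyWild.frobeniusPreimage [ExpChar Ω p] (h : PurelyWild w p B W) :
    PurelyWild w p B (frobeniusPreimage p W) where
  le := h.le.trans (le_frobeniusPreimage p W)
  alg x hx := (h.alg _ (mem_frobeniusPreimage.1 hx)).of_pow (expChar_pos Ω p)
  val x hx hx0 := by
    obtain ⟨k, hk⟩ := h.val _ (mem_frobeniusPreimage.1 hx) (pow_ne_zero p hx0)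
    exact ⟨k + 1, by rwa [map_pow, ← pow_mul, ← pow_succ'] at hk⟩
  res x hx hx1 := by
    have hx1' : w (x ^ p) ≤ 1 := by rw [map_pow]; exact pow_le_one₀ zero_le hx1
    obtain ⟨k, hk⟩ := h.res _ (mem_frobeniusPreimage.1 hx) hx1'
    exact ⟨k + 1, by rwa [← pow_mul, ← pow_succ'] at hk⟩

theorem MaxPurelyWild.mem_of_pow_mem [ExpChar Ω p] (hmax : MaxPurelyWild w p B W) {z : Ω}
    (hz : z ^ p ∈ W) : z ∈ W := by
  rw [← hmax.2 _ hmax.1.frobeniusPreimage (le_frobeniusPreimage p W)]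
  exact mem_frobeniusPreimage.2 hz

theorem MaxPurelyWild.surjective_frobenius [IsAlgClosed Ω] [ExpChar K p] [ExpChar Ω p]
    (hmax : MaxPurelyWild w p ⊥ W) (hsep : ∀ x ∈ W, IsSeparable K x) :
    Function.Surjective (frobenius K p) := by
  intro a
  obtain ⟨β, hβ⟩ := IsAlgClosed.exists_pow_nat_eq (algebraMap K Ω a) (expChar_pos K p)
  have hβW : β ∈ W := hmax.mem_of_pow_mem (hβ ▸ W.algebraMap_mem a)
  obtain ⟨b, rfl⟩ := mem_range_of_isSeparable_of_pow_mem p (hsep β hβW) (n := 1)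
    ⟨a, by rw [pow_one, hβ]⟩
  exact ⟨b, (algebraMap K Ω).injective (by rw [frobenius_def, map_pow, hβ])⟩

theorem exists_pow_eq_of_mem_bot [ExpChar K p] (hK : Function.Surjective (frobenius K p)) :
    ∀ y ∈ (⊥ : IntermediateField K Ω), ∃ z ∈ (⊥ : IntermediateField K Ω),
      z ^ p = y := by
  intro y hy
  obtain ⟨a, rfl⟩ := mem_bot.1 hy
  obtain ⟨b, rfl⟩ := hK a
  exact ⟨algebraMap K Ω b, IntermediateField.algebraMap_mem _ b,
    by rw [frobenius_def, map_pow]⟩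

theorem PurelyWild.immediateAlg [ExpChar Ω p] (h : PurelyWild w p B L)
    (hB : ∀ y ∈ B, ∃ z ∈ B, z ^ p = y) : ImmediateAlg w B L := by
  have hq (k : ℕ) : p ^ k ≠ 0 := pow_ne_zero k (expChar_pos Ω p).ne'
  refine ⟨⟨h.le, fun x hx hx0 => ?_, fun x hx hx1 => ?_⟩, h.alg⟩
  · obtain ⟨k, y, hy, hy0, hwy⟩ := h.val x hx hx0
    obtain ⟨z, hz, rfl⟩ := exists_pow_pow_eq_of_exists_pow_eq hB k y hy
    refine ⟨z, hz, fun hz0 => hy0 (by rw [hz0, zero_pow (hq k)]), ?_⟩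
    rwa [map_pow, pow_left_inj₀ zero_le zero_le (hq k)] at hwy
  · obtain ⟨k, y, hy, hy1, hxy⟩ := h.res x hx hx1
    obtain ⟨z, hz, rfl⟩ := exists_pow_pow_eq_of_exists_pow_eq hB k y hy
    refine ⟨z, hz, ?_, ?_⟩
    · rwa [map_pow, pow_le_one_iff (hq k)] at hy1
    · rwa [← sub_pow_expChar_pow, map_pow, pow_lt_one_iff (hq k)] at hxy

theorem ImmediateAlg.purelyWild (h : ImmediateAlg w B L) : PurelyWild w p B L where
  le := h.1.le
  alg := h.2
  val x hx hx0 := ⟨0, by simpa using h.1.val x hx hx0⟩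
  res x hx hx1 := ⟨0, by simpa using h.1.res x hx hx1⟩

theorem purelyWild_iff_immediateAlg [ExpChar Ω p] (hB : ∀ y ∈ B, ∃ z ∈ B, z ^ p = y) :
    PurelyWild w p B L ↔ ImmediateAlg w B L :=
  ⟨fun h => h.immediateAlg hB, ImmediateAlg.purelyWild⟩

theorem maxPurelyWild_iff_maxImmediateAlg [ExpChar Ω p]
    (hB : ∀ y ∈ B, ∃ z ∈ B, z ^ p = y) :
    MaxPurelyWild w p B M ↔ MaxImmediateAlg w B M := by
  simp only [MaxPurelyWild, MaxImmediateAlg, purelyWild_iff_immediateAlg hB]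

end ValWild

theorem perfect_of_separable_maximal_purely_wild_general
    {K Ω Γ₀ : Type*} [Field K] [Field Ω] [Algebra K Ω] [IsAlgClosure K Ω]
    [LinearOrderedCommGroupWithZero Γ₀]
    (w : Valuation Ω Γ₀) (p : ℕ) (hp : p.Prime) [CharP K p]
    (W : IntermediateField K Ω)
    -- `(W|K,ν)` is a nontrivial maximal purely wild extension with `W|K` separable:
    (hmax : MaxPurelyWild w p ⊥ W)
    (hsep : ∀ x ∈ W, IsSeparable K x) :
    PerfectField K ∧
    ∀ M : IntermediateField K Ω, (MaxPurelyWild w p ⊥ M ↔ MaxImmediateAlg w ⊥ M) := by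
  have : Fact p.Prime := ⟨hp⟩
  have : CharP Ω p := charP_of_injective_algebraMap (algebraMap K Ω).injective p
  have : IsAlgClosed Ω := IsAlgClosure.isAlgClosed K
  have hK := hmax.surjective_frobenius hsep
  have : PerfectRing K p := .ofSurjective K p hK
  exact ⟨PerfectRing.toPerfectField K p,
    fun M => maxPurelyWild_iff_maxImmediateAlg (exists_pow_eq_of_mem_bot hK)⟩

/-- (Proposition: if a henselian field of characteristic `p` has a
nontrivial separable maximal purely wild extension, then it is perfect and maximal
purely wild extensions coincide with maximal immediate algebraic extensions). -/
theorem perfect_of_separable_maximal_purely_wild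
    {K Ω Γ₀ : Type*} [Field K] [Field Ω] [Algebra K Ω] [IsAlgClosure K Ω]
    [LinearOrderedCommGroupWithZero Γ₀]
    (w : Valuation Ω Γ₀) (p : ℕ) (hp : p.Prime) [CharP K p]
    (hhens : IsHenselianVF w (⊥ : IntermediateField K Ω))
    (W : IntermediateField K Ω)
    -- `(W|K,ν)` is a nontrivial maximal purely wild extension with `W|K` separable:
    (hmax : MaxPurelyWild w p ⊥ W) (hnt : W ≠ ⊥)
    (hsep : ∀ x ∈ W, IsSeparable K x) :
    PerfectField K ∧
    ∀ M : IntermediateField K Ω, (MaxPurelyWild w p ⊥ M ↔ MaxImmediateAlg w ⊥ M) :=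
  perfect_of_separable_maximal_purely_wild_general w p hp W hmax hsep
end

section
/- Let (K,ν) be a henselian valued field with char K = 0 and char Kν = p > 0 that contains a primitive p-th root of unity. Let K(θ)|K be a Kummer extension with νθ = 0. Then every element of ν(θ−K) is ≤ (ν p)/(p−1). -/
open Polynomial IntermediateField

open ValWild Polynomial IntermediateField

/-! If `w (θ - c) ^ (p - 1) < w p = w (ζ - 1) ^ (p - 1)`, then `w c = 1` and
`b = a / c ^ p = (θ / c) ^ p` satisfies `w (1 - b) < w (ζ - 1) ^ p`. Over a henselian field
such a `b` is a `p`-th power: Hensel's lemma applies to `(1 + (ζ - 1) X) ^ p - b`, rescaled to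
be monic, because `p ∣ (p choose k)` for `0 < k < p`. Hence `θ ^ p` is the `p`-th power of an
element of `K`, so `θ` lies in `K` up to a `p`-th root of unity, contradicting `θ ∉ K`. -/

namespace Valuation

section Ring

variable {R Γ₀ : Type*} [CommRing R] [LinearOrderedCommGroupWithZero Γ₀] (v : Valuation R Γ₀)

theorem map_eq_one_of_pow_eq_one {μ : R} {n : ℕ} (hn : n ≠ 0) (hμ : μ ^ n = 1) : v μ = 1 :=
  (pow_eq_one_iff_left hn).mp (by rw [← map_pow, hμ, map_one])

theorem map_sub_one_le_one_of_pow_eq_one {μ : R} {n : ℕ} (hn : n ≠ 0) (hμ : μ ^ n = 1) :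
    v (μ - 1) ≤ 1 :=
  (v.map_sub _ _).trans (max_le (v.map_eq_one_of_pow_eq_one hn hμ).le v.map_one.le)

theorem map_one_sub_pow_le {u : R} (hu : v u ≤ 1) (k : ℕ) : v (1 - u ^ k) ≤ v (1 - u) := by
  rw [← mul_neg_geom_sum, map_mul]
  refine mul_le_of_le_one_right' (v.map_sum_le fun i _ => ?_)
  rw [map_pow]
  exact pow_le_one' hu i

theorem map_pow_sub_pow_le {p : ℕ} (hp : p.Prime) {x y : R} (hx : v x ≤ 1) (hy : v y ≤ 1) :
    v (x ^ p - y ^ p) ≤ max (v p * v (x - y)) (v (x - y) ^ p) := by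
  have hxy : v (x - y) ≤ 1 := (v.map_sub x y).trans (max_le hx hy)
  obtain ⟨r, hr⟩ := exists_add_pow_prime_eq (R := v.integer) hp ⟨x - y, hxy⟩ ⟨y, hy⟩
  have hexpand : x ^ p - y ^ p = (x - y) ^ p + p * (x - y) * (y * r) := by
    have := congrArg Subtype.val hr
    simp only [Subring.coe_add, Subring.coe_pow, Subring.coe_mul, Subring.coe_natCast,
      sub_add_cancel] at this
    rw [this]
    ring
  rw [hexpand, add_comm]
  refine (v.map_add _ _).trans (max_le_max ?_ (map_pow v _ _).le)
  rw [v.map_mul, v.map_mul (p : R)]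
  exact mul_le_of_le_one_right' (by rw [v.map_mul]; exact mul_le_one' hy r.2)

end Ring

section Field

variable {F Γ₀ : Type*} [Field F] [LinearOrderedCommGroupWithZero Γ₀]

theorem Integer.mem_maximalIdeal_iff_valuation_lt_one {v : Valuation F Γ₀}
    [IsLocalRing v.integer] {x : v.integer} :
    x ∈ IsLocalRing.maximalIdeal v.integer ↔ v x < 1 := by
  rw [IsLocalRing.mem_maximalIdeal, mem_nonunits_iff, Integer.not_isUnit_iff_valuation_lt_one]

variable (v : Valuation F Γ₀)

theorem exists_isRoot_of_henselianLocalRing [HenselianLocalRing v.integer] {f : F[X]}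
    (hf : f.Monic) (hcoeff : ∀ n, v (f.coeff n) ≤ 1) {a : F} (ha : v a ≤ 1)
    (heval : v (f.eval a) < 1) (hderiv : v (f.derivative.eval a) = 1) :
    ∃ y, v (y - a) < 1 ∧ f.IsRoot y := by
  have hsub : (f.coeffs : Set F) ⊆ v.integer := fun c hc => by
    obtain ⟨n, -, rfl⟩ := mem_coeffs_iff.mp hc
    exact hcoeff n
  set g := f.toSubring v.integer hsub
  have hg : g.map v.integer.subtype = f := map_toSubring _ _ _
  have hg_eval (z : v.integer) : ((g.eval z : v.integer) : F) = f.eval (z : F) := by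
    rw [← hg]
    exact (eval_map_apply v.integer.subtype z).symm
  have hg_deriv (z : v.integer) :
      ((g.derivative.eval z : v.integer) : F) = f.derivative.eval (z : F) := by
    rw [← hg, derivative_map]
    exact (eval_map_apply v.integer.subtype z).symm
  obtain ⟨y, hy, hya⟩ := HenselianLocalRing.is_henselian g ((monic_toSubring _ _ _).mpr hf)
    ⟨a, ha⟩ (Integer.mem_maximalIdeal_iff_valuation_lt_one.mpr ((hg_eval _).symm ▸ heval))
    ((integer.integers v).isUnit_iff_valuation_eq_one.mpr ((congrArg v (hg_deriv _)).trans hderiv))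
  refine ⟨y, Integer.mem_maximalIdeal_iff_valuation_lt_one.mp hya, ?_⟩
  rw [IsRoot, ← hg_eval, hy.eq_zero, ZeroMemClass.coe_zero]

end Field

end Valuation

namespace IsPrimitiveRoot

section Domain

variable {R Γ₀ : Type*} [CommRing R] [IsDomain R] [LinearOrderedCommGroupWithZero Γ₀]

theorem valuation_natCast_eq_sub_one_pow (v : Valuation R Γ₀) {p : ℕ} (hp : p.Prime) {ζ : R}
    (hζ : IsPrimitiveRoot ζ p) : v (p : R) = v (ζ - 1) ^ (p - 1) := by
  have : Fact p.Prime := ⟨hp⟩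
  have hprod : (p : R) = ∏ μ ∈ primitiveRoots p R, (1 - μ) := by
    simpa [cyclotomic_eq_prod_X_sub_primitiveRoots hζ, eval_prod] using
      (eval_one_cyclotomic_prime (R := R) (p := p)).symm
  have hfactor : ∀ μ ∈ primitiveRoots p R, v (1 - μ) = v (1 - ζ) := by
    intro μ hμ
    rw [mem_primitiveRoots hp.pos] at hμ
    obtain ⟨i, -, rfl⟩ := hζ.eq_pow_of_pow_eq_one hμ.pow_eq_one
    obtain ⟨j, -, hj⟩ := hμ.eq_pow_of_pow_eq_one hζ.pow_eq_one
    refine le_antisymm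
      (v.map_one_sub_pow_le (v.map_eq_one_of_pow_eq_one hp.ne_zero hζ.pow_eq_one).le i) ?_
    conv_lhs => rw [← hj]
    exact v.map_one_sub_pow_le (v.map_eq_one_of_pow_eq_one hp.ne_zero hμ.pow_eq_one).le j
  rw [v.map_sub_swap ζ, hprod, map_prod, Finset.prod_congr rfl hfactor, Finset.prod_const,
    hζ.card_primitiveRoots, Nat.totient_prime hp]

end Domain

section Field

variable {F : Type*} [Field F]

theorem exists_eq_pow_mul_of_pow_eq_pow {p : ℕ} [NeZero p] {ζ : F} (hζ : IsPrimitiveRoot ζ p)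
    {x y : F} (h : x ^ p = y ^ p) : ∃ i, x = ζ ^ i * y := by
  rcases eq_or_ne y 0 with rfl | hy
  · refine ⟨0, ?_⟩
    rw [mul_zero, ← pow_eq_zero_iff (NeZero.ne p), h, zero_pow (NeZero.ne p)]
  obtain ⟨i, -, hi⟩ := hζ.eq_pow_of_pow_eq_one (ξ := x / y)
    (by rw [div_pow, h, div_self (pow_ne_zero _ hy)])
  exact ⟨i, by rw [hi, div_mul_cancel₀ _ hy]⟩

theorem exists_pow_eq_of_valuation_one_sub_lt {Γ₀ : Type*} [LinearOrderedCommGroupWithZero Γ₀]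
    (v : Valuation F Γ₀) [HenselianLocalRing v.integer]
    {p : ℕ} (hp : p.Prime) {ζ : F} (hζ : IsPrimitiveRoot ζ p) {b : F}
    (hb : v (1 - b) < v (ζ - 1) ^ p) : ∃ x, x ^ p = b := by
  set η := ζ - 1
  have hη0 : η ≠ 0 := sub_ne_zero.mpr (hζ.ne_one hp.one_lt)
  have hvη0 : v η ≠ 0 := v.ne_zero_iff.mpr hη0
  have hvη1 : v η ≤ 1 := v.map_sub_one_le_one_of_pow_eq_one hp.ne_zero hζ.pow_eq_one
  have hvp := hζ.valuation_natCast_eq_sub_one_pow v hp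
  -- `f.eval y = ((1 + η * y) ^ p - b) / η ^ p`
  set f : F[X] := (X + C η⁻¹) ^ p - C (b / η ^ p)
  have hmonic : f.Monic := ((monic_X_add_C _).pow p).sub_of_left <|
    degree_C_le.trans_lt (by rw [degree_pow, degree_X_add_C, nsmul_one]; exact_mod_cast hp.pos)
  have hv0 : v (f.eval 0) < 1 := by
    have : f.eval 0 = (1 - b) / η ^ p := by simp [f, inv_pow, sub_div]
    rwa [this, map_div₀, map_pow, div_lt_one₀ (zero_lt_iff.mpr (pow_ne_zero _ hvη0))]
  have hcoeff (n : ℕ) : v (f.coeff n) ≤ 1 := by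
    rcases Nat.eq_zero_or_pos n with rfl | hn
    · exact (coeff_zero_eq_eval_zero f ▸ hv0).le
    have : f.coeff n = (η ^ (p - n))⁻¹ * p.choose n := by
      simp [f, coeff_X_add_C_pow, coeff_C, hn.ne', inv_pow]
    rw [this, map_mul, map_inv₀, map_pow, inv_mul_le_one₀ (zero_lt_iff.mpr (pow_ne_zero _ hvη0))]
    rcases lt_or_ge n p with hnp | hnp
    · obtain ⟨m, hm⟩ := hp.dvd_choose_self hn.ne' hnp
      calc v (p.choose n : F) = v (p : F) * v (m : F) := by rw [hm, Nat.cast_mul, map_mul]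
        _ ≤ v η ^ (p - 1) := by rw [hvp]; exact mul_le_of_le_one_right' (natCast_mem v.integer m)
        _ ≤ v η ^ (p - n) := pow_le_pow_right_of_le_one' hvη1 (by omega)
    · rw [Nat.sub_eq_zero_of_le hnp, pow_zero]
      exact natCast_mem v.integer _
  have hderiv : v (f.derivative.eval 0) = 1 := by
    have : f.derivative.eval 0 = p * (η ^ (p - 1))⁻¹ := by
      simp [f, derivative_X_add_C_pow, inv_pow]
    rw [this, map_mul, map_inv₀, map_pow, hvp, mul_inv_cancel₀ (pow_ne_zero _ hvη0)]
  obtain ⟨y, -, hy⟩ := v.exists_isRoot_of_henselianLocalRing hmonic hcoeff (by simp) hv0 hderiv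
  refine ⟨η * (y + η⁻¹), ?_⟩
  have hy' : (y + η⁻¹) ^ p = b / η ^ p := by simpa [f, sub_eq_zero] using hy
  rw [mul_pow, hy', mul_div_cancel₀ _ (pow_ne_zero _ hη0)]

end Field

end IsPrimitiveRoot

namespace ValWild

variable {K Ω Γ₀ : Type*} [Field K] [Field Ω] [Algebra K Ω] [LinearOrderedCommGroupWithZero Γ₀]

theorem IsHenselianVF.exists_pow_eq_algebraMap {w : Valuation Ω Γ₀}
    (hw : IsHenselianVF w (⊥ : IntermediateField K Ω)) {p : ℕ} (hp : p.Prime) {ζ : K}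
    (hζ : IsPrimitiveRoot ζ p) {b : K}
    (hb : w (1 - algebraMap K Ω b) < w (algebraMap K Ω ζ - 1) ^ p) :
    ∃ x ∈ (⊥ : IntermediateField K Ω), x ^ p = algebraMap K Ω b := by
  let v := w.comap (algebraMap (⊥ : IntermediateField K Ω) Ω)
  have : HenselianLocalRing v.integer := hw
  obtain ⟨x, hx⟩ := (hζ.map_of_injective (algebraMap K (⊥ : IntermediateField K Ω)).injective)
    |>.exists_pow_eq_of_valuation_one_sub_lt v hp (b := algebraMap K _ b) (by simpa [v] using hb)
  exact ⟨x, x.2, by simpa using congrArg (algebraMap _ Ω) hx⟩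

end ValWild

/-- For the multiplicative valuation `w`, the additive bound `ν(θ - c) ≤ νp/(p-1)` reads
`w p ≤ w (θ - c) ^ (p - 1)`. -/
theorem kummer_extension_value_bound_general
    {K Ω Γ₀ : Type*} [Field K] [Field Ω] [Algebra K Ω]
    [LinearOrderedCommGroupWithZero Γ₀]
    (w : Valuation Ω Γ₀) (p : ℕ) (hp : p.Prime)
    (hhens : IsHenselianVF w (⊥ : IntermediateField K Ω))
    -- `K` contains a primitive `p`-th root of unity:
    (ζ : K) (hζ : IsPrimitiveRoot ζ p)
    (θ : Ω) (a : K)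
    -- `K(θ)|K` is a Kummer extension, i.e. `θ^p = a ∈ K` and `θ ∉ K`:
    (hKum : θ ^ p = algebraMap K Ω a)
    (hnotin : θ ∉ (⊥ : IntermediateField K Ω))
    -- `νθ = 0`:
    (hθ : w θ = 1) :
    ∀ c : K, w ((p : ℕ) : Ω) ≤ w (θ - algebraMap K Ω c) ^ (p - 1) := by
  intro c
  by_contra! hc
  set ι := algebraMap K Ω
  have hζ' := hζ.map_of_injective ι.injective
  set L := w (ι ζ - 1)
  have hL : w (p : Ω) = L ^ (p - 1) := hζ'.valuation_natCast_eq_sub_one_pow w hp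
  have hε : w (θ - ι c) < L := lt_of_pow_lt_pow_left₀ (p - 1) zero_le (hL ▸ hc)
  have hιc : w (ι c) = 1 := by
    rw [← hθ]
    refine w.map_eq_of_sub_lt ?_
    rw [w.map_sub_swap, hθ]
    exact hε.trans_le (w.map_sub_one_le_one_of_pow_eq_one hp.ne_zero hζ'.pow_eq_one)
  have hc0 : c ≠ 0 := by
    rintro rfl
    simp at hιc
  have hb : w (1 - ι (a / c ^ p)) < L ^ p := by
    have hdiv : 1 - ι (a / c ^ p) = (ι c ^ p - θ ^ p) / ι c ^ p := by
      rw [hKum, map_div₀, map_pow, one_sub_div (pow_ne_zero _ ((map_ne_zero ι).mpr hc0))]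
    calc w (1 - ι (a / c ^ p)) = w (θ ^ p - ι c ^ p) := by
          rw [hdiv, map_div₀, map_pow, hιc, one_pow, div_one, w.map_sub_swap]
      _ ≤ max (w p * w (θ - ι c)) (w (θ - ι c) ^ p) := w.map_pow_sub_pow_le hp hθ.le hιc.le
      _ < L ^ p := max_lt
          (by rw [hL, ← pow_sub_one_mul hp.ne_zero]
              exact mul_lt_mul_of_pos_left hε (pow_pos (zero_le.trans_lt hε) _))
          (pow_lt_pow_left₀ hε zero_le hp.ne_zero)
  obtain ⟨x, hx, hxb⟩ := hhens.exists_pow_eq_algebraMap hp hζ hb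
  have : NeZero p := ⟨hp.ne_zero⟩
  obtain ⟨i, hi⟩ := hζ'.exists_eq_pow_mul_of_pow_eq_pow (x := θ) (y := ι c * x) (by
    rw [hKum, mul_pow, hxb, ← map_pow, ← map_mul, mul_div_cancel₀ _ (pow_ne_zero _ hc0)])
  exact hnotin <| hi ▸ mul_mem (pow_mem ((⊥ : IntermediateField K Ω).algebraMap_mem ζ) i)
    (mul_mem ((⊥ : IntermediateField K Ω).algebraMap_mem c) hx)

/-- Lemma: value-group bound for Kummer extensions.  Additively,
`ν(θ-K) ≤ νp/(p-1)`; multiplicatively, `w p ≤ w (θ - c) ^ (p - 1)` for every `c ∈ K`. -/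
theorem kummer_extension_value_bound
    {K Ω Γ₀ : Type*} [Field K] [Field Ω] [Algebra K Ω]
    [LinearOrderedCommGroupWithZero Γ₀] [CharZero K]
    (w : Valuation Ω Γ₀) (p : ℕ) (hp : p.Prime)
    -- the residue field has characteristic `p`:
    (hresc : w ((p : ℕ) : Ω) < 1)
    (hhens : IsHenselianVF w (⊥ : IntermediateField K Ω))
    -- `K` contains a primitive `p`-th root of unity:
    (ζ : K) (hζ : IsPrimitiveRoot ζ p)
    (θ : Ω) (a : K)
    -- `K(θ)|K` is a Kummer extension, i.e. `θ^p = a ∈ K` and `θ ∉ K`: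
    (hKum : θ ^ p = algebraMap K Ω a)
    (hnotin : θ ∉ (⊥ : IntermediateField K Ω))
    -- `νθ = 0`:
    (hθ : w θ = 1) :
    ∀ c : K, w ((p : ℕ) : Ω) ≤ w (θ - algebraMap K Ω c) ^ (p - 1) :=
  kummer_extension_value_bound_general w p hp hhens ζ hζ θ a hKum hnotin hθ
end

section
/- Let (K(θ)|K,ν) be an extension of valued fields, and set Λ := ν(θ−K) ∩ νK. Then either ν(θ−K) = Λ, or ν(θ−K) = Λ ∪ {γ} for a single element γ with γ > λ for every λ ∈ Λ (and γ ∉ νK). -/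
open Polynomial IntermediateField

/-! If `ν(θ - c₀) ∉ νK` and `ν(θ - c) ≠ ν(θ - c₀)`, then `ν(c - c₀)` lies in `νK`, so it differs
from `ν(θ - c₀)` as well. By the ultrametric inequality the (additive) minimum of the three values
`ν(θ - c₀)`, `ν(θ - c)`, `ν(c - c₀)` is attained twice, so `ν(θ - c) = ν(c - c₀) ∈ νK` and
`ν(θ - c₀)` is the largest of them. -/

namespace Valuation

variable {R Γ₀ : Type*} [Ring R] [LinearOrderedCommMonoidWithZero Γ₀]

theorem lt_of_map_sub_ne_of_map_ne (v : Valuation R Γ₀) {x y : R}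
    (hsub : v (y - x) ≠ v x) (hy : v y ≠ v x) : v x < v y := by
  by_contra! hle
  exact hsub (v.map_sub_eq_of_lt_right (lt_of_le_of_ne hle hy))

end Valuation

namespace ValWild

variable {K Ω Γ₀ : Type*} [Field K] [Field Ω] [Algebra K Ω]
  [LinearOrderedCommGroupWithZero Γ₀]

theorem isValueOn_bot_algebraMap (w : Valuation Ω Γ₀) {c : K} (hc : c ≠ 0) :
    IsValueOn w (⊥ : IntermediateField K Ω) (w (algebraMap K Ω c)) :=
  ⟨_, IntermediateField.algebraMap_mem _ c, (_root_.map_ne_zero _).2 hc, rfl⟩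

theorem lt_and_isValueOn_of_not_isValueOn (w : Valuation Ω Γ₀) {θ : Ω} {c₀ c : K}
    (h₀ : ¬ IsValueOn w (⊥ : IntermediateField K Ω) (w (θ - algebraMap K Ω c₀)))
    (hc : w (θ - algebraMap K Ω c) ≠ w (θ - algebraMap K Ω c₀)) :
    w (θ - algebraMap K Ω c₀) < w (θ - algebraMap K Ω c) ∧
      IsValueOn w (⊥ : IntermediateField K Ω) (w (θ - algebraMap K Ω c)) := by
  have hdiff : θ - algebraMap K Ω c - (θ - algebraMap K Ω c₀) = algebraMap K Ω (c₀ - c) := by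
    rw [map_sub]; ring
  have hK : IsValueOn w (⊥ : IntermediateField K Ω)
      (w (θ - algebraMap K Ω c - (θ - algebraMap K Ω c₀))) :=
    hdiff ▸ isValueOn_bot_algebraMap w (sub_ne_zero.2 fun h => hc (h ▸ rfl))
  have hlt := w.lt_of_map_sub_ne_of_map_ne (fun h => h₀ (h ▸ hK)) hc
  exact ⟨hlt, w.map_sub_eq_of_lt_left hlt ▸ hK⟩

end ValWild

open ValWild Polynomial IntermediateField

/-- The additive order on values of the paper is the reverse of the multiplicative order of
`Γ₀`: `γ > λ` there reads `γ < λ` here. -/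
theorem value_set_of_generator_dichotomy
    {K Ω Γ₀ : Type*} [Field K] [Field Ω] [Algebra K Ω]
    [LinearOrderedCommGroupWithZero Γ₀]
    (w : Valuation Ω Γ₀) (θ : Ω) :
    -- either every value `ν(θ-c)` lies in `νK` ...
    (∀ c : K, IsValueOn w (⊥ : IntermediateField K Ω) (w (θ - algebraMap K Ω c))) ∨
    -- ... or there is a single value `γ ∉ νK`, all other values lie in `νK`, and `γ`
    -- is (additively) greater than all of them:
    (∃ γ : Γ₀, (∃ c : K, w (θ - algebraMap K Ω c) = γ) ∧
      ¬ IsValueOn w (⊥ : IntermediateField K Ω) γ ∧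
      (∀ c : K, w (θ - algebraMap K Ω c) = γ ∨
        IsValueOn w (⊥ : IntermediateField K Ω) (w (θ - algebraMap K Ω c))) ∧
      (∀ c : K, w (θ - algebraMap K Ω c) ≠ γ → γ < w (θ - algebraMap K Ω c))) := by
  by_cases h : ∀ c : K, IsValueOn w (⊥ : IntermediateField K Ω) (w (θ - algebraMap K Ω c))
  · exact .inl h
  obtain ⟨c₀, h₀⟩ := not_forall.1 h
  refine .inr ⟨_, ⟨c₀, rfl⟩, h₀, fun c => ?_, fun c hc =>
    (lt_and_isValueOn_of_not_isValueOn w h₀ hc).1⟩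
  exact (eq_or_ne _ _).imp_right fun hc => (lt_and_isValueOn_of_not_isValueOn w h₀ hc).2
end
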